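/- arXiv:1312.7795 — 2 statements merged into one kernel-verified Lean document; each statement's English description precedes it below -/
import Mathlib

section
/- If w : ℝ^d → [0,∞) satisfies condition [C1-η] for some η ∈ (0,1) (i.e., there exists r₀ > 0 such that inf over r ≥ r₀ of inf over |u| ≤ r^η, |z| ≥ r of (w(u - z) - w(u)) is nonnegative), and w is continuous at 0 with w(0)=0, symmetric, has convex sublevel sets bounded for small levels, and polynomial growth, then w satisfies condition [A5]: for every M > 0 there exists M' > 0 such that sup{w(u) : |u| ≤ M} ≤ inf{w(u) : |u| ≥ M'}. -/
open MeasureTheory Filter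

/-- Condition [C1-η] (together with the `W_p`-type regularity of `w`) implies condition [A5]:
for every `M > 0` there is `M' > 0` with `sup {w u : ‖u‖ ≤ M} ≤ inf {w u : ‖u‖ ≥ M'}`. -/
theorem stmt_2 (d : ℕ) (p η : ℝ) (hη : η ∈ Set.Ioo (0:ℝ) 1)
    (w : EuclideanSpace ℝ (Fin d) → ℝ) (hnonneg : ∀ u, 0 ≤ w u)
    -- [C1-η]
    (hC1 : ∃ r₀ : ℝ, 0 < r₀ ∧ ∀ r : ℝ, r₀ ≤ r → ∀ u z : EuclideanSpace ℝ (Fin d),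
      ‖u‖ ≤ r ^ η → r ≤ ‖z‖ → w u ≤ w (u - z))
    -- W_p-type regularity of w
    (h0 : w 0 = 0) (hcont : ContinuousAt w 0) (hsymm : ∀ u, w (-u) = w u)
    (hconv : ∀ c : ℝ, 0 < c → Convex ℝ {u | w u < c})
    (hbdd : ∃ c₀ : ℝ, 0 < c₀ ∧ ∀ c : ℝ, 0 < c → c ≤ c₀ → Bornology.IsBounded {u | w u < c})
    (hgrowth : ∃ C : ℝ, 0 < C ∧ ∀ u, w u ≤ C * (1 + ‖u‖ ^ p)) :
    -- [A5]
    ∀ M : ℝ, 0 < M → ∃ M' : ℝ, 0 < M' ∧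
      ∀ u v : EuclideanSpace ℝ (Fin d), ‖u‖ ≤ M → M' ≤ ‖v‖ → w u ≤ w v := by
  obtain ⟨r₀, hr₀, hC1⟩ := hC1
  intro M hM
  obtain ⟨hη0, hη1⟩ := hη
  set b : ℝ := (max 1 M) ^ (η⁻¹) with hb
  have hb0 : (0:ℝ) ≤ max 1 M := le_trans zero_le_one (le_max_left _ _)
  set r : ℝ := max r₀ b with hr
  have hrr₀ : r₀ ≤ r := le_max_left _ _
  have hbr : b ≤ r := le_max_right _ _
  have hbnn : 0 ≤ b := Real.rpow_nonneg hb0 _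
  have hrη : M ≤ r ^ η := by
    have h1 : b ^ η ≤ r ^ η := Real.rpow_le_rpow hbnn hbr hη0.le
    have h2 : b ^ η = max 1 M := by
      rw [hb, Real.rpow_inv_rpow hb0 hη0.ne']
    calc M ≤ max 1 M := le_max_right _ _
      _ = b ^ η := h2.symm
      _ ≤ r ^ η := h1
  refine ⟨r + M, by positivity, ?_⟩
  intro u v hu hv
  have hz : r ≤ ‖u - v‖ := by
    have : ‖v‖ - ‖u‖ ≤ ‖u - v‖ := by
      have := norm_sub_norm_le (v) (u)
      calc ‖v‖ - ‖u‖ ≤ ‖v - u‖ := this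
        _ = ‖u - v‖ := norm_sub_rev _ _
    linarith
  have := hC1 r hrr₀ u (u - v) (le_trans hu hrη) hz
  simpa using this
end

section
/- Let w : ℝ^d → [0,∞) belong to W_p. Then there exist positive constants δ₁, δ₂, δ₃ such that inf over |z| > δ₃ of ∫_{|u| ≤ δ₁} (w(u - z) - w(u)) du > δ₂. -/
open MeasureTheory Metric

/-!
Continuity at `0` makes `w < c₀ / 2` on a small ball `B` around `0`, while boundedness of the
sublevel set `{w < c₀}` forces `w (u - z) ≥ c₀` for `u ∈ B` once `z` is far away. Hence the
integrand is at least `c₀ / 2` on `B`. Integrability: `w (u - z)` is dominated on `B` by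
`C (1 + ‖u - z‖ ^ p)`, which is continuous there because `B` does not contain `z`.
-/

theorem le_apply_of_sublevel_subset_closedBall {E : Type*} [SeminormedAddCommGroup E]
    {w : E → ℝ} {c R : ℝ} (hR : {u | w u < c} ⊆ closedBall 0 R) {v : E} (hv : R < ‖v‖) :
    c ≤ w v := by
  by_contra! h
  exact (mem_closedBall_zero_iff.1 (hR h)).not_gt hv

theorem exists_forall_closedBall_lt_of_continuousAt {X : Type*} [PseudoMetricSpace X]
    {w : X → ℝ} {x : X} (hw : ContinuousAt w x) {c : ℝ} (hc : w x < c) :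
    ∃ δ > 0, ∀ u ∈ closedBall x δ, w u < c :=
  nhds_basis_closedBall.eventually_iff.1 (hw.eventually_lt_const hc)

theorem integrableOn_comp_sub_of_le_one_add_rpow {E : Type*} [NormedAddCommGroup E]
    [MeasurableSpace E] [BorelSpace E] {μ : Measure E} [IsFiniteMeasureOnCompacts μ]
    {w : E → ℝ} (hw : Measurable w) (hnonneg : ∀ u, 0 ≤ w u) {C p : ℝ} (hg : ∀ u, w u ≤ C * (1 + ‖u‖ ^ p))
    {s : Set E} (hs : IsCompact s) {z : E} (hz : ∀ u ∈ s, u ≠ z) :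
    IntegrableOn (fun u => w (u - z)) s μ := by
  have hbound : IntegrableOn (fun u => C * (1 + ‖u - z‖ ^ p)) s μ := by
    refine ContinuousOn.integrableOn_compact hs ?_
    refine continuousOn_const.mul (continuousOn_const.add ?_)
    exact (continuous_id.sub continuous_const).norm.continuousOn.rpow_const
      fun u hu => Or.inl (norm_ne_zero_iff.2 (sub_ne_zero.2 (hz u hu)))
  refine hbound.mono' (hw.comp (measurable_id.sub_const z)).aestronglyMeasurable ?_
  filter_upwards with u
  rw [Real.norm_of_nonneg (hnonneg _)]
  exact hg _

theorem stmt_3_general (d : ℕ) (p : ℝ)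
    (w : EuclideanSpace ℝ (Fin d) → ℝ) (hnonneg : ∀ u, 0 ≤ w u)
    (hmeas : Measurable w)
    (h0 : w 0 = 0) (hcont : ContinuousAt w 0)
    (hbdd : ∃ c₀ : ℝ, 0 < c₀ ∧ ∀ c : ℝ, 0 < c → c ≤ c₀ → Bornology.IsBounded {u | w u < c})
    (hgrowth : ∃ C : ℝ, 0 < C ∧ ∀ u, w u ≤ C * (1 + ‖u‖ ^ p)) :
    ∃ δ₁ δ₂ δ₃ : ℝ, 0 < δ₁ ∧ 0 < δ₂ ∧ 0 < δ₃ ∧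
      ∀ z : EuclideanSpace ℝ (Fin d), δ₃ < ‖z‖ →
        δ₂ < ∫ u in Metric.closedBall (0 : EuclideanSpace ℝ (Fin d)) δ₁,
          (w (u - z) - w u) := by
  obtain ⟨c₀, hc₀, hb⟩ := hbdd
  obtain ⟨C, -, hg⟩ := hgrowth
  obtain ⟨R, hR⟩ := (hb c₀ hc₀ le_rfl).subset_closedBall 0
  obtain ⟨δ, hδ, hsmall⟩ :=
    exists_forall_closedBall_lt_of_continuousAt hcont (h0 ▸ half_pos hc₀)
  set B := closedBall (0 : EuclideanSpace ℝ (Fin d)) δ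
  have hV : 0 < volume.real B :=
    ENNReal.toReal_pos (measure_closedBall_pos volume 0 hδ).ne' measure_closedBall_lt_top.ne
  refine ⟨δ, c₀ / 4 * volume.real B, |R| + δ, hδ, by positivity, by positivity, fun z hz => ?_⟩
  have hfar : ∀ u ∈ B, |R| < ‖u - z‖ := fun u hu => by
    have := norm_sub_norm_le z u
    rw [norm_sub_rev] at this
    linarith [mem_closedBall_zero_iff.1 hu]
  have hgap : ∀ u ∈ B, c₀ / 2 ≤ w (u - z) - w u := fun u hu => by
    linarith [hsmall u hu,
      le_apply_of_sublevel_subset_closedBall hR ((le_abs_self R).trans_lt (hfar u hu))]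
  have hint : IntegrableOn (fun u => w (u - z) - w u) B := by
    refine (integrableOn_comp_sub_of_le_one_add_rpow hmeas hnonneg hg (isCompact_closedBall 0 δ)
      fun u hu => sub_ne_zero.1 (norm_pos_iff.1 ((abs_nonneg R).trans_lt (hfar u hu)))).sub ?_
    refine Measure.integrableOn_of_bounded (M := c₀ / 2) measure_closedBall_lt_top.ne
      hmeas.aestronglyMeasurable ?_
    filter_upwards [ae_restrict_mem measurableSet_closedBall] with u hu
    rw [Real.norm_of_nonneg (hnonneg u)]
    exact (hsmall u hu).le
  calc c₀ / 4 * volume.real B < c₀ / 2 * volume.real B := by gcongr; linarith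
    _ ≤ _ := setIntegral_ge_of_const_le_real measurableSet_closedBall
      measure_closedBall_lt_top.ne hgap hint

/-- For `w ∈ W_p`, there are `δ₁, δ₂, δ₃ > 0` with
`inf_{‖z‖ > δ₃} ∫_{‖u‖ ≤ δ₁} (w (u - z) - w u) du > δ₂`. -/
theorem stmt_3 (d : ℕ) (hd : 0 < d) (p : ℝ) (hp : 0 < p)
    (w : EuclideanSpace ℝ (Fin d) → ℝ) (hnonneg : ∀ u, 0 ≤ w u)
    (hmeas : Measurable w)
    (h0 : w 0 = 0) (hcont : ContinuousAt w 0) (hnontriv : ¬ ∀ u, w u = 0)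
    (hsymm : ∀ u, w (-u) = w u)
    (hconv : ∀ c : ℝ, 0 < c → Convex ℝ {u | w u < c})
    (hbdd : ∃ c₀ : ℝ, 0 < c₀ ∧ ∀ c : ℝ, 0 < c → c ≤ c₀ → Bornology.IsBounded {u | w u < c})
    (hgrowth : ∃ C : ℝ, 0 < C ∧ ∀ u, w u ≤ C * (1 + ‖u‖ ^ p)) :
    ∃ δ₁ δ₂ δ₃ : ℝ, 0 < δ₁ ∧ 0 < δ₂ ∧ 0 < δ₃ ∧
      ∀ z : EuclideanSpace ℝ (Fin d), δ₃ < ‖z‖ →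
        δ₂ < ∫ u in Metric.closedBall (0 : EuclideanSpace ℝ (Fin d)) δ₁,
          (w (u - z) - w u) :=
  stmt_3_general d p w hnonneg hmeas h0 hcont hbdd hgrowth
end
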